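/- arXiv:2512.16410 — 6 statements merged into one kernel-verified Lean document; each statement's English description precedes it below -/
import Mathlib

section
/- Let (X,d) be a metric space and define the standard fuzzy metric M_d by M_d(x,y,t) = t/(t + d(x,y)) for t > 0 and M_d(x,y,0) = 0. Then (X, M_d, ·), where · denotes the usual product t-norm on [0,1], is a non-Archimedean fuzzy metric space; in particular M_d(x,z,max{t,s}) ≥ M_d(x,y,t) · M_d(y,z,s) for all x,y,z ∈ X and all t,s > 0. -/
open Set

/-- A continuous t-norm on `[0,1]`. -/
structure IsContinuousTNorm (star : ℝ → ℝ → ℝ) : Prop where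
  mem : ∀ a ∈ Icc (0:ℝ) 1, ∀ b ∈ Icc (0:ℝ) 1, star a b ∈ Icc (0:ℝ) 1
  comm : ∀ a ∈ Icc (0:ℝ) 1, ∀ b ∈ Icc (0:ℝ) 1, star a b = star b a
  assoc : ∀ a ∈ Icc (0:ℝ) 1, ∀ b ∈ Icc (0:ℝ) 1, ∀ c ∈ Icc (0:ℝ) 1,
    star (star a b) c = star a (star b c)
  one : ∀ a ∈ Icc (0:ℝ) 1, star a 1 = a
  mono : ∀ a b c d : ℝ, a ∈ Icc (0:ℝ) 1 → b ∈ Icc (0:ℝ) 1 → c ∈ Icc (0:ℝ) 1 →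
    d ∈ Icc (0:ℝ) 1 → a ≤ c → b ≤ d → star a b ≤ star c d
  continuous : ContinuousOn (fun p : ℝ × ℝ => star p.1 p.2) (Icc 0 1 ×ˢ Icc 0 1)

/-- A fuzzy metric in the sense of Kramosil and Michalek: `M x y t` is the degree of
nearness of `x` and `y` at time `t ≥ 0`. -/
structure IsFuzzyMetric {X : Type*} (star : ℝ → ℝ → ℝ) (M : X → X → ℝ → ℝ) : Prop where
  range : ∀ x y t, 0 ≤ t → M x y t ∈ Icc (0:ℝ) 1
  km1 : ∀ x y, M x y 0 = 0
  km2 : ∀ x y, (∀ t, 0 < t → M x y t = 1) ↔ x = y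
  km3 : ∀ x y t, M x y t = M y x t
  km4 : ∀ x y z t s, 0 < t → 0 < s → star (M x y t) (M y z s) ≤ M x z (t + s)
  km5 : ∀ x y t, 0 < t → ContinuousWithinAt (M x y) (Iio t) t

/-- A non-Archimedean fuzzy metric: (KM4) is replaced by the stronger (NA). -/
structure IsNAFuzzyMetric {X : Type*} (star : ℝ → ℝ → ℝ) (M : X → X → ℝ → ℝ) : Prop where
  range : ∀ x y t, 0 ≤ t → M x y t ∈ Icc (0:ℝ) 1
  km1 : ∀ x y, M x y 0 = 0
  km2 : ∀ x y, (∀ t, 0 < t → M x y t = 1) ↔ x = y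
  km3 : ∀ x y t, M x y t = M y x t
  na : ∀ x y z t s, 0 < t → 0 < s → star (M x y t) (M y z s) ≤ M x z (max t s)
  km5 : ∀ x y t, 0 < t → ContinuousWithinAt (M x y) (Iio t) t

/-- The open ball `B_M(x, ε, t)`. -/
def fuzzyBall {X : Type*} (M : X → X → ℝ → ℝ) (x : X) (ε t : ℝ) : Set X :=
  {y | 1 - ε < M x y t}

/-- The topology on `X` is the one induced by the fuzzy metric `M`, i.e. the open balls
form a neighbourhood basis at every point. -/
def FuzzyCompatible {X : Type*} [TopologicalSpace X] (M : X → X → ℝ → ℝ) : Prop :=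
  ∀ x : X, (nhds x).HasBasis (fun p : ℝ × ℝ => 0 < p.1 ∧ p.1 < 1 ∧ 0 < p.2)
    (fun p => fuzzyBall M x p.1 p.2)

/-- The Hausdorff fuzzy distance between two subsets of a fuzzy metric space. -/
noncomputable def fuzzyHSet {X : Type*} (M : X → X → ℝ → ℝ) (A B : Set X) (t : ℝ) : ℝ :=
  min (⨅ a : A, ⨆ b : B, M a b t) (⨅ b : B, ⨆ a : A, M a b t)

/-- The Hausdorff fuzzy distance between the two parts of a disjoint union `X ⊕ Y`. -/
noncomputable def fuzzyH {X Y : Type*} (M : (X ⊕ Y) → (X ⊕ Y) → ℝ → ℝ) (t : ℝ) : ℝ :=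
  min (⨅ x : X, ⨆ y : Y, M (Sum.inl x) (Sum.inr y) t)
    (⨅ y : Y, ⨆ x : X, M (Sum.inl x) (Sum.inr y) t)

/-- A non-Archimedean fuzzy metric on the disjoint union `X ⊕ Y` is admissible if it
restricts to the given fuzzy metrics on `X` and on `Y`. -/
def IsAdmissible {X Y : Type*} (star : ℝ → ℝ → ℝ) (MX : X → X → ℝ → ℝ)
    (MY : Y → Y → ℝ → ℝ) (M : (X ⊕ Y) → (X ⊕ Y) → ℝ → ℝ) : Prop :=
  IsNAFuzzyMetric star M ∧
    (∀ x x' t, 0 ≤ t → M (Sum.inl x) (Sum.inl x') t = MX x x' t) ∧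
    (∀ y y' t, 0 ≤ t → M (Sum.inr y) (Sum.inr y') t = MY y y' t)

/-- The non-Archimedean Gromov-Hausdorff fuzzy distance. -/
noncomputable def MGH {X Y : Type*} (star : ℝ → ℝ → ℝ) (MX : X → X → ℝ → ℝ)
    (MY : Y → Y → ℝ → ℝ) (t : ℝ) : ℝ :=
  sSup ((fun M => fuzzyH M t) '' {M | IsAdmissible star MX MY M})

/-- The `t`-diameter of a fuzzy metric space. -/
noncomputable def fuzzyDiam {X : Type*} (M : X → X → ℝ → ℝ) (s : ℝ) : ℝ :=
  ⨅ p : X × X, M p.1 p.2 s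

/-- `cov(X, ε, t) ≤ N` : `X` can be covered by at most `N` balls `B(c, ε, t)`. -/
def CovLE {X : Type*} (M : X → X → ℝ → ℝ) (ε t : ℝ) (N : ℕ) : Prop :=
  ∃ C : Finset X, C.card ≤ N ∧ ∀ x : X, ∃ c ∈ C, 1 - ε < M c x t

/-- Property (TN1) of a t-norm: `a - a ∗ b ≥ a ∗ (1 - b)`. -/
def TN1 (star : ℝ → ℝ → ℝ) : Prop :=
  ∀ a ∈ Icc (0:ℝ) 1, ∀ b ∈ Icc (0:ℝ) 1, star a (1 - b) ≤ a - star a b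

/-- The standard fuzzy metric associated to a metric space. -/
noncomputable def stdFuzzy {X : Type*} [MetricSpace X] (x y : X) (t : ℝ) : ℝ :=
  if 0 < t then t / (t + dist x y) else 0

lemma stdFuzzy_na_key {t s a b d : ℝ} (ht : 0 < t) (hs : 0 < s) (ha : 0 ≤ a)
    (hb : 0 ≤ b) (hd : 0 ≤ d) (htri : d ≤ a + b) :
    (t / (t + a)) * (s / (s + b)) ≤ max t s / (max t s + d) := by
  set m := max t s with hm
  have hmt : t ≤ m := le_max_left t s
  have hms : s ≤ m := le_max_right t s
  have hm0 : 0 < m := lt_of_lt_of_le ht hmt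
  have h1 : t / (t + a) ≤ m / (m + a) := by
    rw [div_le_div_iff₀ (by linarith) (by linarith)]; nlinarith
  have h2 : s / (s + b) ≤ m / (m + b) := by
    rw [div_le_div_iff₀ (by linarith) (by linarith)]; nlinarith
  have h3 : (m / (m + a)) * (m / (m + b)) ≤ m / (m + (a + b)) := by
    rw [div_mul_div_comm, div_le_div_iff₀ (by positivity) (by linarith)]
    nlinarith [mul_nonneg (mul_nonneg hm0.le ha) hb]
  have h4 : m / (m + (a + b)) ≤ m / (m + d) :=
    div_le_div_of_nonneg_left hm0.le (by linarith) (by linarith)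
  calc (t / (t + a)) * (s / (s + b)) ≤ (m / (m + a)) * (m / (m + b)) := by
        apply mul_le_mul h1 h2 (by positivity) (by positivity)
    _ ≤ m / (m + d) := le_trans h3 h4

/-- the standard fuzzy metric `M_d` of a metric space, together with the
product t-norm, is a non-Archimedean fuzzy metric; in particular the (NA) inequality
holds. -/
theorem stdFuzzy_isNAFuzzyMetric_prod {X : Type*} [MetricSpace X] :
    IsNAFuzzyMetric (fun a b : ℝ => a * b) (stdFuzzy (X := X)) ∧
      ∀ (x y z : X) (t s : ℝ), 0 < t → 0 < s →
        stdFuzzy x y t * stdFuzzy y z s ≤ stdFuzzy x z (max t s) := by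
  have hna : ∀ (x y z : X) (t s : ℝ), 0 < t → 0 < s →
      stdFuzzy x y t * stdFuzzy y z s ≤ stdFuzzy x z (max t s) := by
    intro x y z t s ht hs
    have hm : 0 < max t s := lt_of_lt_of_le ht (le_max_left t s)
    simp only [stdFuzzy, if_pos ht, if_pos hs, if_pos hm]
    exact stdFuzzy_na_key ht hs dist_nonneg dist_nonneg dist_nonneg
      (dist_triangle x y z)
  refine ⟨⟨?_, ?_, ?_, ?_, hna, ?_⟩, hna⟩
  · intro x y t _
    unfold stdFuzzy
    split_ifs with ht
    · constructor
      · positivity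
      · rw [div_le_one (by linarith [dist_nonneg (x := x) (y := y)])]
        linarith [dist_nonneg (x := x) (y := y)]
    · exact ⟨le_refl 0, zero_le_one⟩
  · intro x y; simp [stdFuzzy]
  · intro x y
    constructor
    · intro h
      have h1 := h 1 one_pos
      simp only [stdFuzzy, if_pos one_pos] at h1
      have hpos : ((1:ℝ) + dist x y) ≠ 0 := by
        have := dist_nonneg (x := x) (y := y); linarith
      have h2 : (1:ℝ) = 1 + dist x y := (div_eq_one_iff_eq hpos).mp h1
      have hd : dist x y = 0 := by linarith
      exact dist_eq_zero.mp hd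
    · rintro rfl
      intro t ht
      simp only [stdFuzzy, if_pos ht, dist_self, add_zero]
      exact div_self ht.ne'
  · intro x y t; simp [stdFuzzy, dist_comm]
  · intro x y t ht
    have hcont : ContinuousWithinAt (fun u : ℝ => u / (u + dist x y)) (Iio t) t := by
      apply ContinuousAt.continuousWithinAt
      apply ContinuousAt.div continuousAt_id (by fun_prop)
      intro h
      have := dist_nonneg (x := x) (y := y); linarith [ht, this, h]
    have hev : stdFuzzy x y =ᶠ[nhdsWithin t (Iio t)] fun u => u / (u + dist x y) := by
      filter_upwards [mem_nhdsWithin_of_mem_nhds (Ioi_mem_nhds ht)] with u hu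
      unfold stdFuzzy
      rw [if_pos (Set.mem_Ioi.mp hu)]
    have heq : stdFuzzy x y t = t / (t + dist x y) := by simp [stdFuzzy, if_pos ht]
    exact hcont.congr_of_eventuallyEq hev heq
end

section
/- Let (X,d) be a metric space and let M_d be the standard fuzzy metric, M_d(x,y,t) = t/(t + d(x,y)) for t > 0 and M_d(x,y,0) = 0. Then (X, M_d, ∗_L), where ∗_L is the Lukasiewicz t-norm a ∗_L b = max{a + b − 1, 0}, is a non-Archimedean fuzzy metric space. -/
open Set

/-
Write `M t := t / (t + d)`. Then `1 - M t = d / (t + d)`, and `d ↦ d / (t + d)` is monotone and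
subadditive on `[0, ∞)`; together with the triangle inequality this gives the Lukasiewicz
inequality `M(x,y,t) + M(y,z,t) - 1 ≤ M(x,z,t)` at a common time `t`. Since `M` is nondecreasing
in `t`, both factors can be evaluated at `max t s`, which yields (NA).
-/

section DivAdd

variable {K : Type*} [Field K] [LinearOrder K] [IsStrictOrderedRing K]

theorem div_add_self_le_div_add_self {t a b : K} (ht : 0 < t) (ha : 0 ≤ a) (hab : a ≤ b) :
    a / (t + a) ≤ b / (t + b) := by
  rw [div_le_div_iff₀ (by positivity) (by linarith)]
  nlinarith

theorem add_div_add_add_le {t a b : K} (ht : 0 < t) (ha : 0 ≤ a) (hb : 0 ≤ b) :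
    (a + b) / (t + (a + b)) ≤ a / (t + a) + b / (t + b) := by
  rw [div_add_div _ _ (by positivity) (by positivity),
    div_le_div_iff₀ (by positivity) (by positivity)]
  nlinarith [mul_nonneg (mul_nonneg ha hb) (add_nonneg ha hb), mul_nonneg (mul_nonneg ha hb) ht.le]

theorem div_add_const_le_div_add_const {d t s : K} (hd : 0 ≤ d) (ht : 0 < t) (hts : t ≤ s) :
    t / (t + d) ≤ s / (s + d) := by
  rw [div_le_div_iff₀ (by positivity) (by linarith)]
  nlinarith

end DivAdd

section StdFuzzy

variable {X : Type*} [MetricSpace X]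

theorem stdFuzzy_of_pos (x y : X) {t : ℝ} (ht : 0 < t) : stdFuzzy x y t = t / (t + dist x y) :=
  if_pos ht

theorem stdFuzzy_of_nonpos (x y : X) {t : ℝ} (ht : t ≤ 0) : stdFuzzy x y t = 0 :=
  if_neg ht.not_gt

theorem one_sub_stdFuzzy (x y : X) {t : ℝ} (ht : 0 < t) :
    1 - stdFuzzy x y t = dist x y / (t + dist x y) := by
  have : t + dist x y ≠ 0 := by positivity
  rw [stdFuzzy_of_pos x y ht]
  field_simp
  ring

theorem stdFuzzy_mem_Icc (x y : X) (t : ℝ) : stdFuzzy x y t ∈ Icc (0 : ℝ) 1 := by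
  rcases le_or_gt t 0 with ht | ht
  · rw [stdFuzzy_of_nonpos x y ht]
    exact ⟨le_rfl, zero_le_one⟩
  · have hsub := one_sub_stdFuzzy x y ht
    have : 0 ≤ dist x y / (t + dist x y) := by positivity
    rw [stdFuzzy_of_pos x y ht] at hsub ⊢
    exact ⟨by positivity, by linarith⟩

theorem stdFuzzy_comm (x y : X) (t : ℝ) : stdFuzzy x y t = stdFuzzy y x t := by
  rw [stdFuzzy, stdFuzzy, dist_comm]

theorem stdFuzzy_eq_one_iff {x y : X} {t : ℝ} (ht : 0 < t) : stdFuzzy x y t = 1 ↔ x = y := by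
  rw [eq_comm, ← sub_eq_zero, one_sub_stdFuzzy x y ht,
    div_eq_zero_iff, or_iff_left (by positivity), dist_eq_zero]

theorem stdFuzzy_mono (x y : X) {t s : ℝ} (ht : 0 < t) (hts : t ≤ s) :
    stdFuzzy x y t ≤ stdFuzzy x y s := by
  rw [stdFuzzy_of_pos x y ht, stdFuzzy_of_pos x y (ht.trans_le hts)]
  exact div_add_const_le_div_add_const dist_nonneg ht hts

theorem stdFuzzy_add_stdFuzzy_sub_one_le (x y z : X) {t : ℝ} (ht : 0 < t) :
    stdFuzzy x y t + stdFuzzy y z t - 1 ≤ stdFuzzy x z t := by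
  suffices 1 - stdFuzzy x z t ≤ (1 - stdFuzzy x y t) + (1 - stdFuzzy y z t) by linarith
  rw [one_sub_stdFuzzy x z ht, one_sub_stdFuzzy x y ht, one_sub_stdFuzzy y z ht]
  calc dist x z / (t + dist x z)
      ≤ (dist x y + dist y z) / (t + (dist x y + dist y z)) :=
        div_add_self_le_div_add_self ht dist_nonneg (dist_triangle x y z)
    _ ≤ dist x y / (t + dist x y) + dist y z / (t + dist y z) :=
        add_div_add_add_le ht dist_nonneg dist_nonneg

theorem continuousAt_stdFuzzy (x y : X) {t : ℝ} (ht : 0 < t) : ContinuousAt (stdFuzzy x y) t := by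
  have hcont : ContinuousAt (fun r : ℝ => r / (r + dist x y)) t :=
    continuousAt_id.div (continuousAt_id.add continuousAt_const) (by positivity)
  refine hcont.congr ?_
  filter_upwards [lt_mem_nhds ht] with r hr
  exact (stdFuzzy_of_pos x y hr).symm

theorem lukasiewicz_stdFuzzy_le_stdFuzzy_max (x y z : X) {t s : ℝ} (ht : 0 < t) (hs : 0 < s) :
    max (stdFuzzy x y t + stdFuzzy y z s - 1) 0 ≤ stdFuzzy x z (max t s) := by
  have hm : 0 < max t s := lt_max_of_lt_left ht
  refine max_le ?_ (stdFuzzy_mem_Icc x z _).1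
  calc stdFuzzy x y t + stdFuzzy y z s - 1
      ≤ stdFuzzy x y (max t s) + stdFuzzy y z (max t s) - 1 := by
        gcongr
        · exact stdFuzzy_mono x y ht (le_max_left t s)
        · exact stdFuzzy_mono y z hs (le_max_right t s)
    _ ≤ stdFuzzy x z (max t s) := stdFuzzy_add_stdFuzzy_sub_one_le x y z hm

end StdFuzzy

/-- the standard fuzzy metric `M_d` of a metric space, together with the
Lukasiewicz t-norm `a ∗_L b = max (a + b - 1) 0`, is a non-Archimedean fuzzy metric. -/
theorem stdFuzzy_isNAFuzzyMetric_lukasiewicz {X : Type*} [MetricSpace X] :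
    IsNAFuzzyMetric (fun a b : ℝ => max (a + b - 1) 0) (stdFuzzy (X := X)) := by
  exact
    { range := fun x y t _ => stdFuzzy_mem_Icc x y t
      km1 := fun x y => stdFuzzy_of_nonpos x y le_rfl
      km2 := fun x y => ⟨fun h => (stdFuzzy_eq_one_iff one_pos).1 (h 1 one_pos),
        fun h _ ht => (stdFuzzy_eq_one_iff ht).2 h⟩
      km3 := stdFuzzy_comm
      na := fun x y z _ _ ht hs => lukasiewicz_stdFuzzy_le_stdFuzzy_max x y z ht hs
      km5 := fun x y _ ht => (continuousAt_stdFuzzy x y ht).continuousWithinAt }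
end

section
/- Let (X,d) be a metric space and α ∈ [0,1). Define M_{α1}(x,y,0) = 0 and, for t > 0, M_{α1}(x,y,t) = α if t ≤ d(x,y) and M_{α1}(x,y,t) = 1 if t > d(x,y) (so in particular M_{α1}(x,x,t) = 1 for all t > 0). Then (X, M_{α1}, ∗) is a fuzzy metric space for every continuous t-norm ∗, and if X has exactly two points then (X, M_{α1}, ∗) is a non-Archimedean fuzzy metric space. -/
open Set

/-- The fuzzy set `M_{α1}` associated to a metric space: `M_{α1}(x,y,t) = α` if
`0 < t ≤ d(x,y)`, `= 1` if `t > d(x,y)`, and `= 0` if `t ≤ 0`. -/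
noncomputable def Malpha {X : Type*} [MetricSpace X] (α : ℝ) (x y : X) (t : ℝ) : ℝ :=
  if 0 < t then (if t ≤ dist x y then α else 1) else 0

/-- `(X, M_{α1}, ∗)` is a fuzzy metric space for every continuous t-norm,
and if `X` has exactly two points it is a non-Archimedean fuzzy metric space. -/
theorem malpha_isFuzzyMetric {X : Type*} [MetricSpace X] (α : ℝ) (hα : α ∈ Ico (0:ℝ) 1)
    (star : ℝ → ℝ → ℝ) (hstar : IsContinuousTNorm star) :
    IsFuzzyMetric star (Malpha (X := X) α) ∧
      ((∃ a b : X, a ≠ b ∧ ∀ x : X, x = a ∨ x = b) →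
        IsNAFuzzyMetric star (Malpha (X := X) α)) := by
  obtain ⟨hα0, hα1⟩ := hα
  have hαm : α ∈ Icc (0:ℝ) 1 := ⟨hα0, hα1.le⟩
  have h1m : (1:ℝ) ∈ Icc (0:ℝ) 1 := ⟨zero_le_one, le_refl 1⟩
  have hmem : ∀ (x y : X) (t : ℝ), Malpha (X := X) α x y t ∈ Icc (0:ℝ) 1 := by
    intro x y t
    unfold Malpha
    split_ifs
    · exact hαm
    · exact h1m
    · exact ⟨le_refl 0, zero_le_one⟩
  have hle1 : ∀ a ∈ Icc (0:ℝ) 1, ∀ b ∈ Icc (0:ℝ) 1, star a b ≤ 1 := by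
    intro a ha b hb
    calc star a b ≤ star 1 1 := hstar.mono a b 1 1 ha hb h1m h1m ha.2 hb.2
      _ = 1 := hstar.one 1 h1m
  have hleL : ∀ a ∈ Icc (0:ℝ) 1, ∀ b ∈ Icc (0:ℝ) 1, star a b ≤ a := by
    intro a ha b hb
    calc star a b ≤ star a 1 := hstar.mono a b a 1 ha hb ha h1m le_rfl hb.2
      _ = a := hstar.one a ha
  have hleR : ∀ a ∈ Icc (0:ℝ) 1, ∀ b ∈ Icc (0:ℝ) 1, star a b ≤ b := by
    intro a ha b hb
    rw [hstar.comm a ha b hb]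
    exact hleL b hb a ha
  have hrange : ∀ (x y : X) (t : ℝ), 0 ≤ t → Malpha (X := X) α x y t ∈ Icc (0:ℝ) 1 :=
    fun x y t _ => hmem x y t
  have hself : ∀ (x : X) (t : ℝ), 0 < t → Malpha (X := X) α x x t = 1 := by
    intro x t ht
    unfold Malpha
    rw [if_pos ht, if_neg]
    rw [dist_self]
    linarith
  have km1 : ∀ x y : X, Malpha (X := X) α x y 0 = 0 := by
    intro x y; simp [Malpha]
  have km2 : ∀ x y : X, (∀ t, 0 < t → Malpha (X := X) α x y t = 1) ↔ x = y := by
    intro x y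
    constructor
    · intro h
      by_contra hxy
      have hd : 0 < dist x y := dist_pos.mpr hxy
      have h2 := h (dist x y) hd
      unfold Malpha at h2
      rw [if_pos hd, if_pos le_rfl] at h2
      exact absurd h2 (ne_of_lt hα1)
    · rintro rfl t ht
      exact hself x t ht
  have km3 : ∀ (x y : X) (t : ℝ), Malpha (X := X) α x y t = Malpha (X := X) α y x t := by
    intro x y t; simp [Malpha, dist_comm]
  have km5 : ∀ (x y : X) (t : ℝ), 0 < t →
      ContinuousWithinAt (Malpha (X := X) α x y) (Iio t) t := by
    intro x y t ht
    have : Filter.Tendsto (Malpha (X := X) α x y) (nhdsWithin t (Iio t))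
        (nhds (Malpha (X := X) α x y t)) := by
      rcases le_or_gt t (dist x y) with h | h
      · have hval : Malpha (X := X) α x y t = α := by
          unfold Malpha; rw [if_pos ht, if_pos h]
        rw [hval]
        apply Filter.Tendsto.congr' _ tendsto_const_nhds
        have hmemf : Ioi (0:ℝ) ∩ Iio t ∈ nhdsWithin t (Iio t) :=
          Filter.inter_mem (mem_nhdsWithin_of_mem_nhds (Ioi_mem_nhds ht)) self_mem_nhdsWithin
        filter_upwards [hmemf] with s hs
        have hs1 : (0:ℝ) < s := hs.1
        have hs2 : s < t := hs.2
        unfold Malpha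
        rw [if_pos hs1, if_pos (by linarith)]
      · have hval : Malpha (X := X) α x y t = 1 := by
          unfold Malpha; rw [if_pos ht, if_neg (not_le.mpr h)]
        rw [hval]
        apply Filter.Tendsto.congr' _ tendsto_const_nhds
        have hmemf : Ioi (dist x y) ∩ Iio t ∈ nhdsWithin t (Iio t) :=
          Filter.inter_mem (mem_nhdsWithin_of_mem_nhds (Ioi_mem_nhds h)) self_mem_nhdsWithin
        filter_upwards [hmemf] with s hs
        have hs1 : dist x y < s := hs.1
        have hs0 : 0 < s := lt_of_le_of_lt dist_nonneg hs1
        symm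
        unfold Malpha
        rw [if_pos hs0, if_neg (not_le.mpr hs1)]
    exact this
  have km4 : ∀ (x y z : X) (t s : ℝ), 0 < t → 0 < s →
      star (Malpha (X := X) α x y t) (Malpha (X := X) α y z s) ≤
        Malpha (X := X) α x z (t + s) := by
    intro x y z t s ht hs
    by_cases h : t + s ≤ dist x z
    · have hval : Malpha (X := X) α x z (t + s) = α := by
        unfold Malpha; rw [if_pos (by linarith), if_pos h]
      rw [hval]
      have hor : t ≤ dist x y ∨ s ≤ dist y z := by
        by_contra hc
        push_neg at hc
        have htri := dist_triangle x y z
        linarith [hc.1, hc.2]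
      rcases hor with h1 | h2
      · have : Malpha (X := X) α x y t = α := by
          unfold Malpha; rw [if_pos ht, if_pos h1]
        rw [this]
        exact hleL α hαm _ (hmem y z s)
      · have : Malpha (X := X) α y z s = α := by
          unfold Malpha; rw [if_pos hs, if_pos h2]
        rw [this]
        exact hleR _ (hmem x y t) α hαm
    · have hval : Malpha (X := X) α x z (t + s) = 1 := by
        unfold Malpha; rw [if_pos (by linarith), if_neg h]
      rw [hval]
      exact hle1 _ (hmem x y t) _ (hmem y z s)
  refine ⟨⟨hrange, km1, km2, km3, km4, km5⟩, ?_⟩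
  rintro ⟨a, b, hab, hall⟩
  refine ⟨hrange, km1, km2, km3, ?_, km5⟩
  intro x y z t s ht hs
  by_cases h : max t s ≤ dist x z
  · have htm : 0 < max t s := lt_max_of_lt_left ht
    have hxz : x ≠ z := by
      intro hxz
      rw [hxz, dist_self] at h
      linarith
    have hval : Malpha (X := X) α x z (max t s) = α := by
      unfold Malpha; rw [if_pos htm, if_pos h]
    rw [hval]
    have hy : y = x ∨ y = z := by
      rcases hall y with hy | hy <;> rcases hall x with hx | hx <;> rcases hall z with hz | hz <;>
        first
        | (left; exact hy.trans hx.symm)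
        | (right; exact hy.trans hz.symm)
        | (exact absurd (hx.trans hz.symm) hxz)
    rcases hy with rfl | rfl
    · rw [hself y t ht, hstar.comm 1 h1m _ (hmem y z s), hstar.one _ (hmem y z s)]
      have : Malpha (X := X) α y z s = α := by
        unfold Malpha
        rw [if_pos hs, if_pos (le_trans (le_max_right t s) h)]
      rw [this]
    · rw [hself y s hs, hstar.one _ (hmem x y t)]
      have : Malpha (X := X) α x y t = α := by
        unfold Malpha
        rw [if_pos ht, if_pos (le_trans (le_max_left t s) h)]
      rw [this]
  · have hval : Malpha (X := X) α x z (max t s) = 1 := by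
      unfold Malpha
      rw [if_pos (lt_max_of_lt_left ht), if_neg h]
    rw [hval]
    exact hle1 _ (hmem x y t) _ (hmem y z s)
end

section
/- Let (X, M_X, ∗) and (Y, M_Y, ∗) be compact non-Archimedean fuzzy metric spaces with the same continuous t-norm, and suppose M_GH(X,Y,t) > 1 − ε for some t > 0 and 0 < ε < 1. Then there exist a natural number n and finite sequences x_1,…,x_n ∈ X and y_1,…,y_n ∈ Y such that {x_i} is a (t, ε∗ε∗ε)-net in X (i.e., for every x ∈ X there is i with M_X(x,x_i,t) > (1−ε)∗(1−ε)∗(1−ε)), {y_i} is a (t, ε∗ε∗ε)-net in Y, and for all i,j ∈ {1,…,n}: (a) M_X(x_i,x_j,t) ≥ M_Y(y_i,y_j,t) ∗ (1−ε) ∗ (1−ε) and (b) M_Y(y_i,y_j,t) ≥ M_X(x_i,x_j,t) ∗ (1−ε) ∗ (1−ε). -/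
open Set

section Aux

/-- Auxiliary: a compact fuzzy-compatible space has a finite net at any level `δ < 1`. -/
theorem my_exists_net {X : Type*} [TopologicalSpace X] [CompactSpace X]
    (M : X → X → ℝ → ℝ) (hc : FuzzyCompatible M) (t δ : ℝ) (ht : 0 < t)
    (hδ0 : 0 < δ) (hδ1 : δ < 1) :
    ∃ S : Finset X, ∀ p : X, ∃ c ∈ S, δ < M c p t := by
  have hmem : ∀ c : X, fuzzyBall M c (1 - δ) t ∈ nhds c := fun c =>
    (hc c).mem_of_mem (i := (1 - δ, t)) ⟨by simp; linarith, by simp; linarith, ht⟩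
  have hcov : (Set.univ : Set X) ⊆ ⋃ c, interior (fuzzyBall M c (1 - δ) t) := by
    intro p _
    exact Set.mem_iUnion.2 ⟨p, mem_interior_iff_mem_nhds.2 (hmem p)⟩
  obtain ⟨S, hS⟩ := isCompact_univ.elim_finite_subcover
    (fun c => interior (fuzzyBall M c (1 - δ) t)) (fun c => isOpen_interior) hcov
  refine ⟨S, fun p => ?_⟩
  obtain ⟨c, hcS, hpc⟩ := Set.mem_iUnion₂.1 (hS (Set.mem_univ p))
  refine ⟨c, hcS, ?_⟩
  have := interior_subset hpc
  simp only [fuzzyBall, Set.mem_setOf_eq] at this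
  linarith

end Aux

section Aux2

/-- Auxiliary: combine enumerations of two finsets with pick functions. -/
theorem my_combine {X Y : Type*} (S : Finset X) (T : Finset Y)
    (py : X → Y) (px : Y → X) :
    ∃ (n : ℕ) (x : Fin n → X) (y : Fin n → Y),
      (∀ c ∈ S, ∃ i, x i = c) ∧ (∀ d ∈ T, ∃ i, y i = d) ∧
      (∀ i, y i = py (x i) ∨ x i = px (y i)) := by
  refine ⟨S.card + T.card,
    Fin.append (fun k => (S.equivFin.symm k : X)) (fun k => px (T.equivFin.symm k : Y)),
    Fin.append (fun k => py (S.equivFin.symm k : X)) (fun k => (T.equivFin.symm k : Y)),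
    ?_, ?_, ?_⟩
  · intro c hc
    exact ⟨Fin.castAdd T.card (S.equivFin ⟨c, hc⟩), by simp [Fin.append_left]⟩
  · intro d hd
    exact ⟨Fin.natAdd S.card (T.equivFin ⟨d, hd⟩), by simp [Fin.append_right]⟩
  · intro i
    refine Fin.addCases (fun k => ?_) (fun k => ?_) i
    · left; rw [Fin.append_left, Fin.append_left]
    · right; rw [Fin.append_right, Fin.append_right]

end Aux2

/-- if `M_GH(X,Y,t) > 1 - ε` then there are `(t, ε∗ε∗ε)`-nets
`x_1, …, x_n` in `X` and `y_1, …, y_n` in `Y` satisfying (a) and (b). -/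
theorem exists_nets_of_MGH_gt {X Y : Type*} [TopologicalSpace X] [TopologicalSpace Y]
    [CompactSpace X] [CompactSpace Y] (star : ℝ → ℝ → ℝ) (hstar : IsContinuousTNorm star)
    (MX : X → X → ℝ → ℝ) (MY : Y → Y → ℝ → ℝ)
    (hX : IsNAFuzzyMetric star MX) (hY : IsNAFuzzyMetric star MY)
    (hcX : FuzzyCompatible MX) (hcY : FuzzyCompatible MY)
    (t ε : ℝ) (ht : 0 < t) (hε0 : 0 < ε) (hε1 : ε < 1)
    (hGH : 1 - ε < MGH star MX MY t) :
    ∃ (n : ℕ) (x : Fin n → X) (y : Fin n → Y),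
      (∀ p : X, ∃ i, star (star (1 - ε) (1 - ε)) (1 - ε) < MX p (x i) t) ∧
      (∀ q : Y, ∃ i, star (star (1 - ε) (1 - ε)) (1 - ε) < MY q (y i) t) ∧
      (∀ i j, star (star (MY (y i) (y j) t) (1 - ε)) (1 - ε) ≤ MX (x i) (x j) t) ∧
      (∀ i j, star (star (MX (x i) (x j) t) (1 - ε)) (1 - ε) ≤ MY (y i) (y j) t) := by
  classical
  -- extract an admissible metric witnessing the GH bound
  have himg : ((fun M => fuzzyH M t) '' {M | IsAdmissible star MX MY M}).Nonempty := by
    by_contra h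
    rw [Set.not_nonempty_iff_eq_empty] at h
    rw [MGH, h, Real.sSup_empty] at hGH
    linarith
  obtain ⟨v, ⟨M, hMadm, rfl⟩, hv⟩ := exists_lt_of_lt_csSup himg hGH
  obtain ⟨hM, hMX, hMY⟩ := hMadm
  unfold fuzzyH at hv
  rw [lt_min_iff] at hv
  obtain ⟨hvA, hvB⟩ := hv
  -- nonemptiness
  haveI hXne : Nonempty X := by
    by_contra h; rw [not_nonempty_iff] at h
    rw [Real.iInf_of_isEmpty] at hvA; linarith
  haveI hYne : Nonempty Y := by
    by_contra h; rw [not_nonempty_iff] at h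
    rw [Real.iInf_of_isEmpty] at hvB; linarith
  have hMrange : ∀ p q : X ⊕ Y, M p q t ∈ Set.Icc (0:ℝ) 1 :=
    fun p q => hM.range p q t ht.le
  -- bounds on the sups
  have hbddA : BddAbove (Set.range fun y : Y => M (Sum.inl (Classical.arbitrary X)) (Sum.inr y) t) :=
    ⟨1, by rintro _ ⟨q, rfl⟩; exact (hMrange _ _).2⟩
  have hsupXbdd : ∀ x : X, BddAbove (Set.range fun y : Y => M (Sum.inl x) (Sum.inr y) t) :=
    fun x => ⟨1, by rintro _ ⟨q, rfl⟩; exact (hMrange _ _).2⟩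
  have hsupYbdd : ∀ y : Y, BddAbove (Set.range fun x : X => M (Sum.inl x) (Sum.inr y) t) :=
    fun y => ⟨1, by rintro _ ⟨q, rfl⟩; exact (hMrange _ _).2⟩
  have hAle1 : (⨅ x : X, ⨆ y : Y, M (Sum.inl x) (Sum.inr y) t) ≤ 1 := by
    refine le_trans (ciInf_le ?_ (Classical.arbitrary X)) (ciSup_le fun q => (hMrange _ _).2)
    refine ⟨0, ?_⟩
    rintro _ ⟨x, rfl⟩
    exact le_trans (hMrange (Sum.inl x) (Sum.inr (Classical.arbitrary Y))).1
      (le_ciSup (hsupXbdd x) (Classical.arbitrary Y))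
  -- choose the threshold δ
  set A := ⨅ x : X, ⨆ y : Y, M (Sum.inl x) (Sum.inr y) t with hAdef
  set B := ⨅ y : Y, ⨆ x : X, M (Sum.inl x) (Sum.inr y) t with hBdef
  set δ := (1 - ε + min A B) / 2 with hδdef
  have hminAB : 1 - ε < min A B := lt_min hvA hvB
  have hδA : δ < A := by have := min_le_left A B; rw [hδdef]; linarith
  have hδB : δ < B := by have := min_le_right A B; rw [hδdef]; linarith
  have hδ1 : δ < 1 := by have := min_le_left A B; rw [hδdef]; linarith
  have hδ0 : 0 < δ := by rw [hδdef]; linarith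
  have hεδ : 1 - ε < δ := by rw [hδdef]; linarith
  -- pick functions
  have hpickY : ∀ x : X, ∃ y : Y, δ < M (Sum.inl x) (Sum.inr y) t := by
    intro x
    have h1 : δ < ⨆ y : Y, M (Sum.inl x) (Sum.inr y) t := by
      refine lt_of_lt_of_le hδA (ciInf_le ⟨0, ?_⟩ x)
      rintro _ ⟨x', rfl⟩
      exact le_trans (hMrange (Sum.inl x') (Sum.inr (Classical.arbitrary Y))).1
        (le_ciSup (hsupXbdd x') (Classical.arbitrary Y))
    exact exists_lt_of_lt_ciSup h1
  have hpickX : ∀ y : Y, ∃ x : X, δ < M (Sum.inl x) (Sum.inr y) t := by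
    intro y
    have h1 : δ < ⨆ x : X, M (Sum.inl x) (Sum.inr y) t := by
      refine lt_of_lt_of_le hδB (ciInf_le ⟨0, ?_⟩ y)
      rintro _ ⟨y', rfl⟩
      exact le_trans (hMrange (Sum.inl (Classical.arbitrary X)) (Sum.inr y')).1
        (le_ciSup (hsupYbdd y') (Classical.arbitrary X))
    exact exists_lt_of_lt_ciSup h1
  choose py hpy using hpickY
  choose px hpx using hpickX
  -- nets
  obtain ⟨S, hS⟩ := my_exists_net MX hcX t δ ht hδ0 hδ1
  obtain ⟨T, hT⟩ := my_exists_net MY hcY t δ ht hδ0 hδ1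
  obtain ⟨n, x, y, hxS, hyT, hxy⟩ := my_combine S T py px
  have hcross : ∀ i, δ < M (Sum.inl (x i)) (Sum.inr (y i)) t := by
    intro i
    rcases hxy i with h | h
    · rw [h]; exact hpy (x i)
    · rw [h]; exact hpx (y i)
  -- basic t-norm facts
  have hι : (1 - ε) ∈ Set.Icc (0:ℝ) 1 := ⟨by linarith, by linarith⟩
  have hstar_le_left : ∀ a ∈ Set.Icc (0:ℝ) 1, ∀ b ∈ Set.Icc (0:ℝ) 1, star a b ≤ a := by
    intro a ha b hb
    have h := hstar.mono a b a 1 ha hb ha ⟨zero_le_one, le_rfl⟩ le_rfl hb.2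
    rwa [hstar.one a ha] at h
  have hT0le : star (star (1 - ε) (1 - ε)) (1 - ε) ≤ 1 - ε :=
    le_trans (hstar_le_left _ (hstar.mem _ hι _ hι) _ hι) (hstar_le_left _ hι _ hι)
  -- the chain inequality
  have chain : ∀ p a b q : X ⊕ Y,
      star (M p a t) (star (M a b t) (M b q t)) ≤ M p q t := by
    intro p a b q
    have h1 := hM.na a b q t t ht ht
    rw [max_self] at h1
    have h2 := hM.na p a q t t ht ht
    rw [max_self] at h2
    exact le_trans (hstar.mono _ _ _ _ (hMrange p a)
      (hstar.mem _ (hMrange a b) _ (hMrange b q)) (hMrange p a) (hMrange a q)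
      le_rfl h1) h2
  refine ⟨n, x, y, ?_, ?_, ?_, ?_⟩
  · intro p
    obtain ⟨c, hcS, hc⟩ := hS p
    obtain ⟨i, hi⟩ := hxS c hcS
    refine ⟨i, ?_⟩
    rw [hi, hX.km3]
    linarith
  · intro q
    obtain ⟨d, hdT, hd⟩ := hT q
    obtain ⟨i, hi⟩ := hyT d hdT
    refine ⟨i, ?_⟩
    rw [hi, hY.km3]
    linarith
  · intro i j
    have key := chain (Sum.inl (x i)) (Sum.inr (y i)) (Sum.inr (y j)) (Sum.inl (x j))
    rw [hMX _ _ t ht.le] at key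
    have e1 : M (Sum.inr (y i)) (Sum.inr (y j)) t = MY (y i) (y j) t := hMY _ _ t ht.le
    have e2 : M (Sum.inr (y j)) (Sum.inl (x j)) t = M (Sum.inl (x j)) (Sum.inr (y j)) t :=
      hM.km3 _ _ t
    rw [e1, e2] at key
    have hMYr := hY.range (y i) (y j) t ht.le
    have inner : star (MY (y i) (y j) t) (1 - ε) ≤
        star (MY (y i) (y j) t) (M (Sum.inl (x j)) (Sum.inr (y j)) t) :=
      hstar.mono _ _ _ _ hMYr hι hMYr (hMrange _ _) le_rfl (by linarith [hcross j])
    have outer : star (1 - ε) (star (MY (y i) (y j) t) (1 - ε)) ≤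
        star (M (Sum.inl (x i)) (Sum.inr (y i)) t)
          (star (MY (y i) (y j) t) (M (Sum.inl (x j)) (Sum.inr (y j)) t)) :=
      hstar.mono _ _ _ _ hι (hstar.mem _ hMYr _ hι) (hMrange _ _)
        (hstar.mem _ hMYr _ (hMrange _ _)) (by linarith [hcross i]) inner
    calc star (star (MY (y i) (y j) t) (1 - ε)) (1 - ε)
        = star (1 - ε) (star (MY (y i) (y j) t) (1 - ε)) :=
          hstar.comm _ (hstar.mem _ hMYr _ hι) _ hι
      _ ≤ _ := outer.trans key
  · intro i j
    have key := chain (Sum.inr (y i)) (Sum.inl (x i)) (Sum.inl (x j)) (Sum.inr (y j))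
    rw [hMY _ _ t ht.le] at key
    have e1 : M (Sum.inl (x i)) (Sum.inl (x j)) t = MX (x i) (x j) t := hMX _ _ t ht.le
    have e2 : M (Sum.inr (y i)) (Sum.inl (x i)) t = M (Sum.inl (x i)) (Sum.inr (y i)) t :=
      hM.km3 _ _ t
    rw [e1, e2] at key
    have hMXr := hX.range (x i) (x j) t ht.le
    have inner : star (MX (x i) (x j) t) (1 - ε) ≤
        star (MX (x i) (x j) t) (M (Sum.inl (x j)) (Sum.inr (y j)) t) :=
      hstar.mono _ _ _ _ hMXr hι hMXr (hMrange _ _) le_rfl (by linarith [hcross j])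
    have outer : star (1 - ε) (star (MX (x i) (x j) t) (1 - ε)) ≤
        star (M (Sum.inl (x i)) (Sum.inr (y i)) t)
          (star (MX (x i) (x j) t) (M (Sum.inl (x j)) (Sum.inr (y j)) t)) :=
      hstar.mono _ _ _ _ hι (hstar.mem _ hMXr _ hι) (hMrange _ _)
        (hstar.mem _ hMXr _ (hMrange _ _)) (by linarith [hcross i]) inner
    calc star (star (MX (x i) (x j) t) (1 - ε)) (1 - ε)
        = star (1 - ε) (star (MX (x i) (x j) t) (1 - ε)) :=
          hstar.comm _ (hstar.mem _ hMXr _ hι) _ hι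
      _ ≤ _ := outer.trans key
end

section
/- Let ∗ be a continuous t-norm satisfying property (TN1): a − a ∗ b ≥ a ∗ (1 − b) for every a,b ∈ [0,1]. Let a,b ∈ (0,1), let 0 < K < min{a,b} < 1 and let 0 < ε < 1. If |a − b| < K ∗ ε, then a ≥ b ∗ (1 − ε) and b ≥ a ∗ (1 − ε). -/
open Set

/-- if a continuous t-norm satisfies (TN1), `a, b ∈ (0,1)`,
`0 < K < min a b < 1`, `0 < ε < 1` and `|a - b| < K ∗ ε`, then `a ≥ b ∗ (1-ε)` and
`b ≥ a ∗ (1-ε)`. -/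
theorem tn1_close_lemma (star : ℝ → ℝ → ℝ) (hstar : IsContinuousTNorm star)
    (htn1 : TN1 star) (a b K ε : ℝ) (ha : a ∈ Ioo (0:ℝ) 1) (hb : b ∈ Ioo (0:ℝ) 1)
    (hK0 : 0 < K) (hK : K < min a b) (hab1 : min a b < 1)
    (hε0 : 0 < ε) (hε1 : ε < 1) (h : |a - b| < star K ε) :
    star b (1 - ε) ≤ a ∧ star a (1 - ε) ≤ b := by
  have haI : a ∈ Icc (0:ℝ) 1 := ⟨ha.1.le, ha.2.le⟩
  have hbI : b ∈ Icc (0:ℝ) 1 := ⟨hb.1.le, hb.2.le⟩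
  have hεI : ε ∈ Icc (0:ℝ) 1 := ⟨hε0.le, hε1.le⟩
  have hKI : K ∈ Icc (0:ℝ) 1 := ⟨hK0.le, le_trans (le_trans hK.le (min_le_left _ _)) ha.2.le⟩
  constructor
  · have h1 : star b (1 - ε) ≤ b - star b ε := htn1 b hbI ε hεI
    have h2 : star K ε ≤ star b ε :=
      hstar.mono K ε b ε hKI hεI hbI hεI (le_trans hK.le (min_le_right _ _)) le_rfl
    have h3 : b - a ≤ |a - b| := by rw [abs_sub_comm]; exact le_abs_self _
    linarith [lt_of_lt_of_le h h2]
  · have h1 : star a (1 - ε) ≤ a - star a ε := htn1 a haI ε hεI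
    have h2 : star K ε ≤ star a ε :=
      hstar.mono K ε a ε hKI hεI haI hεI (le_trans hK.le (min_le_left _ _)) le_rfl
    have h3 : a - b ≤ |a - b| := le_abs_self _
    linarith [lt_of_lt_of_le h h2]
end

section
/- Let {(X_n, M_n, ∗)}_{n∈ℕ} be a sequence of nonempty compact non-Archimedean fuzzy metric spaces (with the same continuous t-norm ∗) satisfying: (1) ∗ satisfies property (TN1): a − a∗b ≥ a∗(1−b) for all a,b ∈ [0,1]; (2) there exists a nondecreasing left-continuous function C : (0,∞) → (0,1] with 0 < C(s) ≤ diam_s(X_n) for all s > 0 and all n; (3) for every t > 0 and 0 < ε < 1 there exists N(ε,t) ∈ ℕ with cov(X_n,ε,t) ≤ N(ε,t) for all n; (4) for every t > 0 and 0 < ε < 1, with N = N(ε,t), there exists for each n a (t,ε)-net {x_i^n}_{i=1}^N in X_n such that for every n,m ∈ ℕ, all s > t and all i,j ∈ {1,…,N}, if M_n(x_i^n,x_j^n,s) < M_m(x_i^m,x_j^m,s) then M_n(x_i^n,x_j^n,s)/(M_m(x_i^m,x_j^m,s) ∗ (1−ε)) ≥ M_n(x_i^n,x_j^n,t)/(M_m(x_i^m,x_j^m,t)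 ∗ (1−ε)). Then for every t > 0 and 0 < ε < 1 there exists a subsequence {X_{n_k}}_{k∈ℕ} such that M_GH(X_{n_j}, X_{n_k}, t) > (1−ε) ∗ (1−ε) for all j,k ∈ ℕ. -/
open Set

universe u

/-!
Fix `t, ε` and choose `η` with `(1-η) ∗ (1-η) > (1-ε) ∗ (1-ε)`. All the `(t/2, η)`-nets have
`N` points, so their distance matrices at time `t/2` lie in a compact cube, and a subsequence has
pairwise `δ`-close matrices. By (TN1) the t-norm has no idempotents in `(0,1)`, so multiplying by
`1-η` lowers every `b ≥ C(t/2)` by at least a fixed `δ > 0`; with the ratio condition (4), closeness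
at time `t/2` then gives `M_m(x_i, x_j, s) ∗ (1-η) ≤ M_n(x_i, x_j, s)` for all `s > t/2`. For two
such spaces, setting `M(x, y, s) = (1-η) ∗ max_i M_X(x, a_i, s) ∗ M_Y(b_i, y, s)` for `s > t/2`
(and `0` before) glues `X ⊔ Y` into a non-Archimedean fuzzy metric space in which every point is
`(1-η) ∗ (1-η)`-close to the other space at time `t`.
-/

open Filter Topology

local notation "𝕀" => Icc (0:ℝ) 1

namespace IsContinuousTNorm

variable {star : ℝ → ℝ → ℝ} (hs : IsContinuousTNorm star)
include hs

theorem star_le_left {a b : ℝ} (ha : a ∈ 𝕀) (hb : b ∈ 𝕀) : star a b ≤ a :=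
  (hs.mono a b a 1 ha hb ha ⟨zero_le_one, le_rfl⟩ le_rfl hb.2).trans_eq (hs.one a ha)

theorem star_le_right {a b : ℝ} (ha : a ∈ 𝕀) (hb : b ∈ 𝕀) : star a b ≤ b :=
  hs.comm a ha b hb ▸ hs.star_le_left hb ha

theorem one_star {a : ℝ} (ha : a ∈ 𝕀) : star 1 a = a :=
  (hs.comm 1 ⟨zero_le_one, le_rfl⟩ a ha).trans (hs.one a ha)

theorem star_zero {a : ℝ} (ha : a ∈ 𝕀) : star a 0 = 0 :=
  le_antisymm (hs.star_le_right ha ⟨le_rfl, zero_le_one⟩)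
    (hs.mem a ha 0 ⟨le_rfl, zero_le_one⟩).1

theorem zero_star {a : ℝ} (ha : a ∈ 𝕀) : star 0 a = 0 := by
  rw [hs.comm 0 ⟨le_rfl, zero_le_one⟩ a ha, hs.star_zero ha]

theorem star_le_star_left {a b c : ℝ} (ha : a ∈ 𝕀) (hb : b ∈ 𝕀) (hc : c ∈ 𝕀) (hbc : b ≤ c) :
    star a b ≤ star a c :=
  hs.mono a b a c ha hb ha hc le_rfl hbc

theorem star_le_star_right {a b c : ℝ} (ha : a ∈ 𝕀) (hb : b ∈ 𝕀) (hc : c ∈ 𝕀) (hbc : b ≤ c) :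
    star b a ≤ star c a :=
  hs.mono b a c a hb ha hc ha hbc le_rfl

theorem star_left_comm {a b c : ℝ} (ha : a ∈ 𝕀) (hb : b ∈ 𝕀) (hc : c ∈ 𝕀) :
    star a (star b c) = star b (star a c) := by
  rw [← hs.assoc a ha b hb c hc, hs.comm a ha b hb, hs.assoc b hb a ha c hc]

theorem star_regroup {u p q r w : ℝ} (hu : u ∈ 𝕀) (hp : p ∈ 𝕀) (hq : q ∈ 𝕀) (hr : r ∈ 𝕀)
    (hw : w ∈ 𝕀) :
    star u (star (star p q) (star r w)) = star p (star (star u (star q r)) w) := by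
  rw [hs.assoc p hp q hq _ (hs.mem r hr w hw),
    hs.star_left_comm hu hp (hs.mem q hq _ (hs.mem r hr w hw)), ← hs.assoc q hq r hr w hw,
    ← hs.assoc u hu _ (hs.mem q hq r hr) w hw]

theorem tendsto_star {α : Type*} {l : Filter α} {f g : α → ℝ} {a b : ℝ} (ha : a ∈ 𝕀)
    (hb : b ∈ 𝕀) (hf : Tendsto f l (𝓝 a)) (hg : Tendsto g l (𝓝 b))
    (hfI : ∀ᶠ x in l, f x ∈ 𝕀) (hgI : ∀ᶠ x in l, g x ∈ 𝕀) :
    Tendsto (fun x => star (f x) (g x)) l (𝓝 (star a b)) :=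
  (hs.continuous (a, b) ⟨ha, hb⟩).tendsto.comp
    (tendsto_nhdsWithin_iff.2 ⟨hf.prodMk_nhds hg, hfI.and hgI⟩)

theorem continuousOn_star_left {a : ℝ} (ha : a ∈ 𝕀) : ContinuousOn (star a) 𝕀 :=
  fun _ hz => hs.tendsto_star ha hz tendsto_const_nhds (tendsto_id.mono_left nhdsWithin_le_nhds)
    (Eventually.of_forall fun _ => ha) self_mem_nhdsWithin

theorem continuousOn_star_right {a : ℝ} (ha : a ∈ 𝕀) : ContinuousOn (fun z => star z a) 𝕀 :=
  (hs.continuousOn_star_left ha).congr fun z hz => hs.comm z hz a ha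

theorem star_eq_self_of_idempotent {e w : ℝ} (he : e ∈ 𝕀) (hee : star e e = e)
    (hw : w ∈ Icc 0 e) : star e w = w := by
  obtain ⟨z, hz, rfl⟩ : w ∈ star e '' 𝕀 :=
    intermediate_value_Icc zero_le_one (hs.continuousOn_star_left he)
      (by rwa [hs.star_zero he, hs.one e he])
  rw [← hs.assoc e he e he z hz, hee]

theorem star_self_ne (htn1 : TN1 star) {e : ℝ} (he0 : 0 < e) (he1 : e < 1) :
    star e e ≠ e := by
  intro hee
  have he : e ∈ 𝕀 := ⟨he0.le, he1.le⟩
  set w := min e (1 / 2)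
  have hw : w ∈ Icc 0 e := ⟨by positivity, min_le_left _ _⟩
  have hwI : w ∈ 𝕀 := ⟨hw.1, hw.2.trans he.2⟩
  have hew : star e w = w := hs.star_eq_self_of_idempotent he hee hw
  have hupper : star e (1 - w) ≤ e - w := by simpa only [hew] using htn1 e he w hwI
  have hlower : w ≤ star e (1 - w) :=
    hew.ge.trans (hs.mono e w e (1 - w) he hwI he ⟨by linarith [hwI.2], by linarith [hw.1]⟩
      le_rfl (by linarith [min_le_right e (1 / 2)]))
  rcases min_cases e (1 / 2) with ⟨h, _⟩ | ⟨h, _⟩ <;> linarith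

theorem star_lt_left (htn1 : TN1 star) {b c : ℝ} (hb : b ∈ 𝕀) (hb0 : 0 < b) (hc : c ∈ 𝕀)
    (hc1 : c < 1) : star b c < b := by
  refine (hs.star_le_left hb hc).lt_of_ne fun hbc => ?_
  -- the least `e` with `star b e = b` is an idempotent strictly between `0` and `1`
  have hF : IsCompact (𝕀 ∩ star b ⁻¹' {b}) :=
    isCompact_Icc.of_isClosed_subset ((hs.continuousOn_star_left hb).preimage_isClosed_of_isClosed
      isClosed_Icc isClosed_singleton) inter_subset_left
  obtain ⟨e, ⟨he, hbe⟩, hmin⟩ := hF.exists_isLeast ⟨c, hc, hbc⟩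
  have hbe : star b e = b := hbe
  have hee : star e e ∈ 𝕀 ∩ star b ⁻¹' {b} :=
    ⟨hs.mem e he e he, show star b (star e e) = b by rw [← hs.assoc b hb e he e he, hbe, hbe]⟩
  have he0 : 0 < e := he.1.lt_of_ne fun h => by
    rw [← h, hs.star_zero hb] at hbe
    exact hb0.ne hbe
  exact hs.star_self_ne htn1 he0 ((hmin ⟨hc, hbc⟩).trans_lt hc1)
    (le_antisymm (hs.star_le_left he he) (hmin hee))

theorem exists_forall_star_le_sub (htn1 : TN1 star) {γ c : ℝ} (hγ0 : 0 < γ) (hγ1 : γ ≤ 1)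
    (hc : c ∈ 𝕀) (hc1 : c < 1) : ∃ δ > 0, ∀ b ∈ Icc γ 1, star b c ≤ b - δ := by
  have hsub : Icc γ 1 ⊆ 𝕀 := Icc_subset_Icc hγ0.le le_rfl
  obtain ⟨b₀, hb₀, hmin⟩ := isCompact_Icc.exists_isMinOn (nonempty_Icc.2 hγ1)
    (continuousOn_id.sub ((hs.continuousOn_star_right hc).mono hsub))
  refine ⟨b₀ - star b₀ c,
    sub_pos.2 (hs.star_lt_left htn1 (hsub hb₀) (hγ0.trans_le hb₀.1) hc hc1), fun b hb => ?_⟩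
  have : b₀ - star b₀ c ≤ b - star b c := hmin hb
  linarith

theorem exists_lt_star_one_sub {a ε : ℝ} (ha : a ∈ 𝕀) (ha0 : 0 < a) (hε0 : 0 < ε)
    (hε1 : ε < 1) : ∃ η, 0 < η ∧ η < 1 ∧
      star (1 - ε) (1 - ε) < star (1 - η) (1 - η) ∧ 0 < star a (1 - η) := by
  have hone : (1 : ℝ) ∈ 𝕀 := ⟨zero_le_one, le_rfl⟩
  have hεI : 1 - ε ∈ 𝕀 := ⟨by linarith, by linarith⟩
  have hu : Tendsto (fun η : ℝ => 1 - η) (𝓝[>] 0) (𝓝 1) := by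
    simpa using (tendsto_const_nhds.sub tendsto_id).mono_left (nhdsWithin_le_nhds (a := (0:ℝ)))
  have huI : ∀ᶠ η in 𝓝[>] (0:ℝ), 1 - η ∈ 𝕀 := by
    filter_upwards [Ioo_mem_nhdsGT one_pos] with η hη
    exact ⟨by linarith [hη.2], by linarith [hη.1]⟩
  have hsq := hs.tendsto_star hone hone hu hu huI huI
  have hlin := hs.tendsto_star ha hone tendsto_const_nhds hu (Eventually.of_forall fun _ => ha) huI
  rw [hs.one 1 hone] at hsq
  rw [hs.one a ha] at hlin
  have hεlt : star (1 - ε) (1 - ε) < 1 := (hs.star_le_left hεI hεI).trans_lt (by linarith)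
  have hsmall : ∀ᶠ η in 𝓝[>] (0:ℝ), η ∈ Ioo 0 1 := Ioo_mem_nhdsGT one_pos
  obtain ⟨η, hη, hsqη, hlinη⟩ := (hsmall.and
    ((hsq.eventually (lt_mem_nhds hεlt)).and (hlin.eventually (lt_mem_nhds ha0)))).exists
  exact ⟨η, hη.1, hη.2, hsqη, hlinη⟩

theorem star_le_of_div_le {a a₀ b b₀ u : ℝ} (ha : 0 ≤ a) (hb : b ∈ 𝕀) (hu : u ∈ 𝕀)
    (h₀ : 0 < star b₀ u) (h₀a : star b₀ u < a₀)
    (hdiv : a < b → a₀ / star b₀ u ≤ a / star b u) : star b u ≤ a := by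
  rcases le_or_gt b a with hba | hab
  · exact (hs.star_le_left hb hu).trans hba
  have h1 : 1 < a / star b u := ((one_lt_div h₀).2 h₀a).trans_le (hdiv hab)
  rcases le_or_gt (star b u) 0 with h | h
  · exact h.trans ha
  · exact ((one_lt_div h).1 h1).le

end IsContinuousTNorm

namespace IsNAFuzzyMetric

variable {X : Type*} {star : ℝ → ℝ → ℝ} {M : X → X → ℝ → ℝ} (hM : IsNAFuzzyMetric star M)
include hM

theorem self_eq_one (x : X) {t : ℝ} (ht : 0 < t) : M x x t = 1 :=
  (hM.km2 x x).2 rfl t ht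

theorem monotoneOn (hs : IsContinuousTNorm star) (x y : X) : MonotoneOn (M x y) (Ioi 0) :=
  fun r hr r' hr' hrr' => by
    simpa [hM.self_eq_one y hr', hs.one _ (hM.range x y r (le_of_lt hr)), max_eq_right hrr']
      using hM.na x y y r r' hr hr'

theorem na_same_time (x y z : X) {t : ℝ} (ht : 0 < t) : star (M x y t) (M y z t) ≤ M x z t := by
  simpa using hM.na x y z t t ht ht

theorem fuzzyDiam_le (x y : X) {s : ℝ} (hs0 : 0 ≤ s) : fuzzyDiam M s ≤ M x y s :=
  ciInf_le ⟨0, by rintro _ ⟨p, rfl⟩; exact (hM.range p.1 p.2 s hs0).1⟩ (x, y)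

end IsNAFuzzyMetric

section Hausdorff

variable {X Y : Type*} [Nonempty X] {M : X ⊕ Y → X ⊕ Y → ℝ → ℝ} {t : ℝ}

theorem le_fuzzyH [Nonempty Y] {c : ℝ} (hle : ∀ x y, M (.inl x) (.inr y) t ≤ 1)
    (hX : ∀ x, ∃ y, c ≤ M (.inl x) (.inr y) t) (hY : ∀ y, ∃ x, c ≤ M (.inl x) (.inr y) t) :
    c ≤ fuzzyH M t := by
  refine le_min (le_ciInf fun x => ?_) (le_ciInf fun y => ?_)
  · obtain ⟨y, hy⟩ := hX x
    exact hy.trans (le_ciSup (f := fun y => M (.inl x) (.inr y) t)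
      ⟨1, by rintro _ ⟨y, rfl⟩; exact hle x y⟩ y)
  · obtain ⟨x, hx⟩ := hY y
    exact hx.trans (le_ciSup (f := fun x => M (.inl x) (.inr y) t)
      ⟨1, by rintro _ ⟨x, rfl⟩; exact hle x y⟩ x)

theorem fuzzyH_le_one (hM : ∀ x y, M (.inl x) (.inr y) t ∈ 𝕀) : fuzzyH M t ≤ 1 := by
  obtain ⟨x⟩ := ‹Nonempty X›
  refine (min_le_left _ _).trans ((ciInf_le ⟨0, ?_⟩ x).trans
    (Real.iSup_le (fun y => (hM x y).2) zero_le_one))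
  rintro _ ⟨x, rfl⟩
  exact Real.iSup_nonneg fun y => (hM x y).1

theorem fuzzyH_le_MGH {star : ℝ → ℝ → ℝ} {MX : X → X → ℝ → ℝ} {MY : Y → Y → ℝ → ℝ}
    (hM : IsAdmissible star MX MY M) (ht : 0 ≤ t) : fuzzyH M t ≤ MGH star MX MY t := by
  refine le_csSup ⟨1, ?_⟩ ⟨M, hM, rfl⟩
  rintro _ ⟨M', hM', rfl⟩
  exact fuzzyH_le_one fun x y => hM'.1.range _ _ t ht

end Hausdorff

section Glue

variable {X Y : Type*}

def fuzzyGlue (MX : X → X → ℝ → ℝ) (MY : Y → Y → ℝ → ℝ) (Φ : X → Y → ℝ → ℝ) :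
    X ⊕ Y → X ⊕ Y → ℝ → ℝ
  | .inl x, .inl x' => MX x x'
  | .inl x, .inr y => Φ x y
  | .inr y, .inl x => Φ x y
  | .inr y, .inr y' => MY y y'

structure IsNAFuzzyBridge (star : ℝ → ℝ → ℝ) (MX : X → X → ℝ → ℝ) (MY : Y → Y → ℝ → ℝ)
    (Φ : X → Y → ℝ → ℝ) : Prop where
  range : ∀ x y t, 0 ≤ t → Φ x y t ∈ 𝕀
  zero : ∀ x y, Φ x y 0 = 0
  exists_ne_one : ∀ x y, ∃ t, 0 < t ∧ Φ x y t ≠ 1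
  leftCont : ∀ x y t, 0 < t → ContinuousWithinAt (Φ x y) (Iio t) t
  na_inl : ∀ x x' y t s, 0 < t → 0 < s → star (MX x x' t) (Φ x' y s) ≤ Φ x y (max t s)
  na_inr : ∀ x y y' t s, 0 < t → 0 < s → star (MY y y' t) (Φ x y' s) ≤ Φ x y (max t s)
  na_cross_inl : ∀ x x' y t s, 0 < t → 0 < s → star (Φ x y t) (Φ x' y s) ≤ MX x x' (max t s)
  na_cross_inr : ∀ x y y' t s, 0 < t → 0 < s → star (Φ x y t) (Φ x y' s) ≤ MY y y' (max t s)

theorem IsNAFuzzyBridge.isAdmissible {star : ℝ → ℝ → ℝ} {MX : X → X → ℝ → ℝ}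
    {MY : Y → Y → ℝ → ℝ} {Φ : X → Y → ℝ → ℝ} (hs : IsContinuousTNorm star)
    (hMX : IsNAFuzzyMetric star MX) (hMY : IsNAFuzzyMetric star MY)
    (hΦ : IsNAFuzzyBridge star MX MY Φ) : IsAdmissible star MX MY (fuzzyGlue MX MY Φ) := by
  refine ⟨⟨?_, ?_, ?_, ?_, ?_, ?_⟩, fun _ _ _ _ => rfl, fun _ _ _ _ => rfl⟩
  · rintro (x | y) (x' | y') t ht
    exacts [hMX.range x x' t ht, hΦ.range x y' t ht, hΦ.range x' y t ht, hMY.range y y' t ht]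
  · rintro (x | y) (x' | y')
    exacts [hMX.km1 x x', hΦ.zero x y', hΦ.zero x' y, hMY.km1 y y']
  · have hcross : ∀ x y, ¬ ∀ t, 0 < t → Φ x y t = 1 := fun x y h =>
      let ⟨t, ht, hne⟩ := hΦ.exists_ne_one x y
      hne (h t ht)
    rintro (x | y) (x' | y')
    · exact (hMX.km2 x x').trans Sum.inl_injective.eq_iff.symm
    · exact iff_of_false (hcross x y') Sum.inl_ne_inr
    · exact iff_of_false (hcross x' y) Sum.inr_ne_inl
    · exact (hMY.km2 y y').trans Sum.inr_injective.eq_iff.symm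
  · rintro (x | y) (x' | y') t
    exacts [hMX.km3 x x' t, rfl, rfl, hMY.km3 y y' t]
  · rintro (x | y) (x' | y') (x'' | y'') t s ht hs0
    · exact hMX.na x x' x'' t s ht hs0
    · exact hΦ.na_inl x x' y'' t s ht hs0
    · exact hΦ.na_cross_inl x x'' y' t s ht hs0
    · show star (Φ x y' t) (MY y' y'' s) ≤ Φ x y'' (max t s)
      rw [hs.comm _ (hΦ.range x y' t ht.le) _ (hMY.range y' y'' s hs0.le), hMY.km3, max_comm]
      exact hΦ.na_inr x y'' y' s t hs0 ht
    · show star (Φ x' y t) (MX x' x'' s) ≤ Φ x'' y (max t s)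
      rw [hs.comm _ (hΦ.range x' y t ht.le) _ (hMX.range x' x'' s hs0.le), hMX.km3, max_comm]
      exact hΦ.na_inl x'' x' y s t hs0 ht
    · exact hΦ.na_cross_inr x' y y'' t s ht hs0
    · exact hΦ.na_inr x'' y y' t s ht hs0
    · exact hMY.na y y' y'' t s ht hs0
  · rintro (x | y) (x' | y') t ht
    exacts [hMX.km5 x x' t ht, hΦ.leftCont x y' t ht, hΦ.leftCont x' y t ht, hMY.km5 y y' t ht]

end Glue

section Nets

variable {X Y ι : Type*} [Fintype ι] [Nonempty ι]

noncomputable def viaNets (star : ℝ → ℝ → ℝ) (MX : X → X → ℝ → ℝ) (MY : Y → Y → ℝ → ℝ)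
    (a : ι → X) (b : ι → Y) (x : X) (y : Y) (s : ℝ) : ℝ :=
  Finset.univ.sup' Finset.univ_nonempty fun i => star (MX x (a i) s) (MY (b i) y s)

/-- The factor `u` absorbs the distortion between the nets `a` and `b`, which is only controlled
after time `t₀`. -/
noncomputable def netCross (star : ℝ → ℝ → ℝ) (MX : X → X → ℝ → ℝ) (MY : Y → Y → ℝ → ℝ)
    (a : ι → X) (b : ι → Y) (t₀ u : ℝ) (x : X) (y : Y) (s : ℝ) : ℝ :=
  if t₀ < s then star u (viaNets star MX MY a b x y s) else 0

variable {star : ℝ → ℝ → ℝ} {MX : X → X → ℝ → ℝ} {MY : Y → Y → ℝ → ℝ} {a : ι → X} {b : ι → Y}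

theorem le_viaNets (x : X) (y : Y) (s : ℝ) (i : ι) :
    star (MX x (a i) s) (MY (b i) y s) ≤ viaNets star MX MY a b x y s :=
  Finset.le_sup' (fun i => star (MX x (a i) s) (MY (b i) y s)) (Finset.mem_univ i)

variable (star MX MY a b) in
theorem exists_viaNets_eq (x : X) (y : Y) (s : ℝ) :
    ∃ i, viaNets star MX MY a b x y s = star (MX x (a i) s) (MY (b i) y s) := by
  obtain ⟨i, -, hi⟩ := Finset.exists_mem_eq_sup' Finset.univ_nonempty
    fun i => star (MX x (a i) s) (MY (b i) y s)
  exact ⟨i, hi⟩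

theorem netCross_of_lt {t₀ u s : ℝ} (x : X) (y : Y) (hs : t₀ < s) :
    netCross star MX MY a b t₀ u x y s = star u (viaNets star MX MY a b x y s) :=
  if_pos hs

theorem netCross_of_le {t₀ u s : ℝ} (x : X) (y : Y) (hs : s ≤ t₀) :
    netCross star MX MY a b t₀ u x y s = 0 :=
  if_neg hs.not_gt

variable (hs : IsContinuousTNorm star) (hMX : IsNAFuzzyMetric star MX)
  (hMY : IsNAFuzzyMetric star MY)
include hs hMX hMY

theorem viaNets_mem (x : X) (y : Y) {s : ℝ} (hs0 : 0 ≤ s) :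
    viaNets star MX MY a b x y s ∈ 𝕀 := by
  obtain ⟨i, hi⟩ := exists_viaNets_eq star MX MY a b x y s
  rw [hi]
  exact hs.mem _ (hMX.range _ _ s hs0) _ (hMY.range _ _ s hs0)

theorem viaNets_swap (x : X) (y : Y) {s : ℝ} (hs0 : 0 ≤ s) :
    viaNets star MY MX b a y x s = viaNets star MX MY a b x y s := by
  simp only [viaNets]
  congr 1
  ext i
  rw [hMY.km3 y (b i), hMX.km3 (a i) x, hs.comm _ (hMY.range _ _ s hs0) _ (hMX.range _ _ s hs0)]

theorem continuousWithinAt_viaNets (x : X) (y : Y) {t : ℝ} (ht : 0 < t) :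
    ContinuousWithinAt (viaNets star MX MY a b x y) (Iio t) t := by
  refine ContinuousWithinAt.finset_sup'_apply Finset.univ_nonempty fun i _ => ?_
  have hpos : ∀ᶠ s in 𝓝[<] t, 0 ≤ s := by
    filter_upwards [Ioo_mem_nhdsLT ht] with s hst using hst.1.le
  exact hs.tendsto_star (hMX.range _ _ t ht.le) (hMY.range _ _ t ht.le) (hMX.km5 _ _ t ht)
    (hMY.km5 _ _ t ht) (hpos.mono fun s => hMX.range _ _ s)
    (hpos.mono fun s => hMY.range _ _ s)

theorem star_viaNets_le (x x' : X) (y : Y) {t s : ℝ} (ht : 0 < t) (hs0 : 0 < s) :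
    star (MX x x' t) (viaNets star MX MY a b x' y s) ≤ viaNets star MX MY a b x y (max t s) := by
  have hm : 0 < max t s := lt_max_of_lt_left ht
  obtain ⟨i, hi⟩ := exists_viaNets_eq star MX MY a b x' y s
  rw [hi, ← hs.assoc _ (hMX.range _ _ t ht.le) _ (hMX.range _ _ s hs0.le) _
    (hMY.range _ _ s hs0.le)]
  refine le_trans ?_ (le_viaNets x y (max t s) i)
  exact hs.mono _ _ _ _ (hs.mem _ (hMX.range _ _ t ht.le) _ (hMX.range _ _ s hs0.le))
    (hMY.range _ _ s hs0.le) (hMX.range _ _ _ hm.le) (hMY.range _ _ _ hm.le)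
    (hMX.na x x' (a i) t s ht hs0) (hMY.monotoneOn hs _ _ hs0 hm (le_max_right t s))

theorem exists_viaNets_le (x : X) (y : Y) {t m : ℝ} (ht : 0 < t) (htm : t ≤ m) :
    ∃ i, viaNets star MX MY a b x y t ≤ star (MX x (a i) m) (MY (b i) y m) := by
  have hm : 0 < m := ht.trans_le htm
  obtain ⟨i, hi⟩ := exists_viaNets_eq star MX MY a b x y t
  refine ⟨i, hi.trans_le ?_⟩
  exact hs.mono _ _ _ _ (hMX.range _ _ t ht.le) (hMY.range _ _ t ht.le) (hMX.range _ _ m hm.le)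
    (hMY.range _ _ m hm.le) (hMX.monotoneOn hs _ _ ht hm htm) (hMY.monotoneOn hs _ _ ht hm htm)

theorem star_viaNets_star_viaNets_le {u : ℝ} (hu : u ∈ 𝕀) (x x' : X) (y : Y) {t s : ℝ}
    (ht : 0 < t) (hs0 : 0 < s)
    (hXY : ∀ i j, star (MY (b i) (b j) (max t s)) u ≤ MX (a i) (a j) (max t s)) :
    star u (star (viaNets star MX MY a b x y t) (viaNets star MX MY a b x' y s)) ≤
      MX x x' (max t s) := by
  set m := max t s
  have hm : 0 < m := lt_max_of_lt_left ht
  have hI := hs.mem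
  have hX : ∀ p q, MX p q m ∈ 𝕀 := fun p q => hMX.range p q m hm.le
  have hY : ∀ p q, MY p q m ∈ 𝕀 := fun p q => hMY.range p q m hm.le
  have hV₁ := viaNets_mem (a := a) (b := b) hs hMX hMY x y ht.le
  have hV₂ := viaNets_mem (a := a) (b := b) hs hMX hMY x' y hs0.le
  obtain ⟨i, hV₁m⟩ := exists_viaNets_le (a := a) (b := b) hs hMX hMY x y ht (le_max_left t s)
  obtain ⟨j, hV₂m⟩ := exists_viaNets_le (a := a) (b := b) hs hMX hMY x' y hs0 (le_max_right t s)
  rw [hs.comm _ (hX _ _) _ (hY _ _), hMX.km3 x', hMY.km3 (b j)] at hV₂m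
  have hB : star u (star (MY (b i) y m) (MY y (b j) m)) ≤ MX (a i) (a j) m := by
    rw [hs.comm _ hu _ (hI _ (hY _ _) _ (hY _ _))]
    exact (hs.star_le_star_right hu (hI _ (hY _ _) _ (hY _ _)) (hY _ _)
      (hMY.na_same_time _ _ _ hm)).trans (hXY i j)
  -- follow the chain `x → a i → b i → y → b j → a j → x'` at time `m`
  calc star u (star (viaNets star MX MY a b x y t) (viaNets star MX MY a b x' y s))
      ≤ star u (star (star (MX x (a i) m) (MY (b i) y m)) (star (MY y (b j) m) (MX (a j) x' m))) :=
        hs.star_le_star_left hu (hI _ hV₁ _ hV₂) (hI _ (hI _ (hX _ _) _ (hY _ _)) _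
          (hI _ (hY _ _) _ (hX _ _))) (hs.mono _ _ _ _ hV₁ hV₂ (hI _ (hX _ _) _ (hY _ _))
          (hI _ (hY _ _) _ (hX _ _)) hV₁m hV₂m)
    _ = star (MX x (a i) m) (star (star u (star (MY (b i) y m) (MY y (b j) m))) (MX (a j) x' m)) :=
        hs.star_regroup hu (hX _ _) (hY _ _) (hY _ _) (hX _ _)
    _ ≤ star (MX x (a i) m) (star (MX (a i) (a j) m) (MX (a j) x' m)) :=
        hs.star_le_star_left (hX _ _) (hI _ (hI _ hu _ (hI _ (hY _ _) _ (hY _ _))) _ (hX _ _))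
          (hI _ (hX _ _) _ (hX _ _))
          (hs.star_le_star_right (hX _ _) (hI _ hu _ (hI _ (hY _ _) _ (hY _ _))) (hX _ _) hB)
    _ ≤ MX x x' m :=
        (hs.star_le_star_left (hX _ _) (hI _ (hX _ _) _ (hX _ _)) (hX _ _)
          (hMX.na_same_time _ _ _ hm)).trans (hMX.na_same_time _ _ _ hm)

end Nets

section NetGlue

variable {X Y ι : Type*} [Fintype ι] [Nonempty ι] {star : ℝ → ℝ → ℝ}
  {MX : X → X → ℝ → ℝ} {MY : Y → Y → ℝ → ℝ} {a : ι → X} {b : ι → Y} {t₀ u : ℝ}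
  (hs : IsContinuousTNorm star) (hMX : IsNAFuzzyMetric star MX)
  (hMY : IsNAFuzzyMetric star MY) (hu : u ∈ 𝕀) (ht₀ : 0 ≤ t₀)
include hs hMX hMY hu ht₀

theorem netCross_mem (x : X) (y : Y) (s : ℝ) : netCross star MX MY a b t₀ u x y s ∈ 𝕀 := by
  rcases lt_or_ge t₀ s with hts | hst
  · rw [netCross_of_lt x y hts]
    exact hs.mem u hu _ (viaNets_mem hs hMX hMY x y (ht₀.trans hts.le))
  · rw [netCross_of_le x y hst]
    exact ⟨le_rfl, zero_le_one⟩

theorem netCross_le (x : X) (y : Y) (s : ℝ) : netCross star MX MY a b t₀ u x y s ≤ u := by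
  rcases lt_or_ge t₀ s with hts | hst
  · rw [netCross_of_lt x y hts]
    exact hs.star_le_left hu (viaNets_mem hs hMX hMY x y (ht₀.trans hts.le))
  · rw [netCross_of_le x y hst]
    exact hu.1

omit hu in
theorem netCross_swap (x : X) (y : Y) :
    netCross star MY MX b a t₀ u y x = netCross star MX MY a b t₀ u x y := by
  ext s
  rcases lt_or_ge t₀ s with hts | hst
  · rw [netCross_of_lt y x hts, netCross_of_lt x y hts,
      viaNets_swap hs hMX hMY x y (ht₀.trans hts.le)]
  · rw [netCross_of_le y x hst, netCross_of_le x y hst]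

omit ht₀ in
theorem continuousWithinAt_netCross (x : X) (y : Y) {t : ℝ} (ht : 0 < t) :
    ContinuousWithinAt (netCross star MX MY a b t₀ u x y) (Iio t) t := by
  rcases lt_or_ge t₀ t with htt | htt
  · have hV := continuousWithinAt_viaNets (a := a) (b := b) hs hMX hMY x y ht
    have hpos : ∀ᶠ s in 𝓝[<] t, 0 ≤ s := by
      filter_upwards [Ioo_mem_nhdsLT ht] with s hst using hst.1.le
    refine ContinuousWithinAt.congr_of_eventuallyEq (hs.tendsto_star hu
      (viaNets_mem hs hMX hMY x y ht.le) tendsto_const_nhds hV (Eventually.of_forall fun _ => hu)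
      (hpos.mono fun s => viaNets_mem hs hMX hMY x y)) ?_ (netCross_of_lt x y htt)
    filter_upwards [Ioo_mem_nhdsLT htt] with s hst using netCross_of_lt x y hst.1
  · exact continuousWithinAt_const.congr (fun s hst => netCross_of_le x y (hst.le.trans htt))
      (netCross_of_le x y htt)

theorem star_netCross_le (x x' : X) (y : Y) {t s : ℝ} (ht : 0 < t) (hs0 : 0 < s) :
    star (MX x x' t) (netCross star MX MY a b t₀ u x' y s) ≤
      netCross star MX MY a b t₀ u x y (max t s) := by
  rcases lt_or_ge t₀ s with hts | hst
  · rw [netCross_of_lt x' y hts, netCross_of_lt x y (hts.trans_le (le_max_right t s)),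
      hs.star_left_comm (hMX.range _ _ t ht.le) hu (viaNets_mem hs hMX hMY _ _ hs0.le)]
    exact hs.star_le_star_left hu (hs.mem _ (hMX.range _ _ t ht.le) _
      (viaNets_mem hs hMX hMY _ _ hs0.le)) (viaNets_mem hs hMX hMY _ _ (ht.le.trans
      (le_max_left t s))) (star_viaNets_le hs hMX hMY x x' y ht hs0)
  · rw [netCross_of_le x' y hst, hs.star_zero (hMX.range _ _ t ht.le)]
    exact (netCross_mem hs hMX hMY hu ht₀ x y _).1

theorem netCross_star_netCross_le
    (hXY : ∀ s, t₀ < s → ∀ i j, star (MY (b i) (b j) s) u ≤ MX (a i) (a j) s)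
    (x x' : X) (y : Y) {t s : ℝ} (ht : 0 < t) (hs0 : 0 < s) :
    star (netCross star MX MY a b t₀ u x y t) (netCross star MX MY a b t₀ u x' y s) ≤
      MX x x' (max t s) := by
  have hm : 0 ≤ max t s := (lt_max_of_lt_left ht).le
  rcases le_or_gt t t₀ with htt | htt
  · rw [netCross_of_le x y htt, hs.zero_star (netCross_mem hs hMX hMY hu ht₀ _ _ _)]
    exact (hMX.range _ _ _ hm).1
  rcases le_or_gt s t₀ with hst | hst
  · rw [netCross_of_le x' y hst, hs.star_zero (netCross_mem hs hMX hMY hu ht₀ _ _ _)]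
    exact (hMX.range _ _ _ hm).1
  have hV1 := viaNets_mem (a := a) (b := b) hs hMX hMY x y ht.le
  have hV2 := viaNets_mem (a := a) (b := b) hs hMX hMY x' y hs0.le
  rw [netCross_of_lt x y htt, netCross_of_lt x' y hst]
  calc star (star u (viaNets star MX MY a b x y t)) (star u (viaNets star MX MY a b x' y s))
      ≤ star (star u (viaNets star MX MY a b x y t)) (viaNets star MX MY a b x' y s) :=
        hs.star_le_star_left (hs.mem _ hu _ hV1) (hs.mem _ hu _ hV2) hV2 (hs.star_le_right hu hV2)
    _ = star u (star (viaNets star MX MY a b x y t) (viaNets star MX MY a b x' y s)) :=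
        hs.assoc _ hu _ hV1 _ hV2
    _ ≤ MX x x' (max t s) :=
        star_viaNets_star_viaNets_le hs hMX hMY hu x x' y ht hs0
          (hXY _ (htt.trans_le (le_max_left t s)))

theorem isNAFuzzyBridge_netCross (hu1 : u < 1)
    (hXY : ∀ s, t₀ < s → ∀ i j, star (MY (b i) (b j) s) u ≤ MX (a i) (a j) s)
    (hYX : ∀ s, t₀ < s → ∀ i j, star (MX (a i) (a j) s) u ≤ MY (b i) (b j) s) :
    IsNAFuzzyBridge star MX MY (netCross star MX MY a b t₀ u) where
  range x y t _ := netCross_mem hs hMX hMY hu ht₀ x y t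
  zero x y := netCross_of_le x y ht₀
  exists_ne_one x y := ⟨1, one_pos, ((netCross_le hs hMX hMY hu ht₀ x y 1).trans_lt hu1).ne⟩
  leftCont x y _ ht := continuousWithinAt_netCross hs hMX hMY hu x y ht
  na_inl x x' y _ _ ht hs0 := star_netCross_le hs hMX hMY hu ht₀ x x' y ht hs0
  na_inr x y y' _ _ ht hs0 := by
    simpa only [netCross_swap (a := a) (b := b) (u := u) hs hMX hMY ht₀] using
      star_netCross_le (a := b) (b := a) hs hMY hMX hu ht₀ y y' x ht hs0
  na_cross_inl x x' y _ _ ht hs0 := netCross_star_netCross_le hs hMX hMY hu ht₀ hXY x x' y ht hs0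
  na_cross_inr x y y' _ _ ht hs0 := by
    simpa only [netCross_swap (a := a) (b := b) (u := u) hs hMX hMY ht₀] using
      netCross_star_netCross_le hs hMY hMX hu ht₀ hYX y y' x ht hs0

end NetGlue

theorem star_le_MGH_of_nets {X Y ι : Type*} [Nonempty X] [Nonempty Y] [Fintype ι]
    {star : ℝ → ℝ → ℝ} {MX : X → X → ℝ → ℝ} {MY : Y → Y → ℝ → ℝ} {a : ι → X} {b : ι → Y}
    {t₀ t u : ℝ} (hs : IsContinuousTNorm star) (hMX : IsNAFuzzyMetric star MX)
    (hMY : IsNAFuzzyMetric star MY) (hu : u ∈ 𝕀) (hu1 : u < 1) (ht₀ : 0 < t₀) (htt : t₀ < t)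
    (hnetX : ∀ x, ∃ i, u < MX x (a i) t₀) (hnetY : ∀ y, ∃ i, u < MY y (b i) t₀)
    (hXY : ∀ s, t₀ < s → ∀ i j, star (MY (b i) (b j) s) u ≤ MX (a i) (a j) s)
    (hYX : ∀ s, t₀ < s → ∀ i j, star (MX (a i) (a j) s) u ≤ MY (b i) (b j) s) :
    star u u ≤ MGH star MX MY t := by
  obtain ⟨i₀, -⟩ := hnetX (Classical.arbitrary X)
  have : Nonempty ι := ⟨i₀⟩
  have ht : 0 < t := ht₀.trans htt
  have hΦ := isNAFuzzyBridge_netCross hs hMX hMY hu ht₀.le hu1 hXY hYX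
  have hcross : ∀ x y i, star u (star (MX x (a i) t) (MY (b i) y t)) ≤
      netCross star MX MY a b t₀ u x y t := fun x y i => by
    rw [netCross_of_lt x y htt]
    exact hs.star_le_star_left hu (hs.mem _ (hMX.range _ _ t ht.le) _ (hMY.range _ _ t ht.le))
      (viaNets_mem hs hMX hMY x y ht.le) (le_viaNets x y t i)
  refine (le_fuzzyH (fun x y => (hΦ.range x y t ht.le).2) (fun x => ?_) (fun y => ?_)).trans
    (fuzzyH_le_MGH (hΦ.isAdmissible hs hMX hMY) ht.le)
  · obtain ⟨i, hi⟩ := hnetX x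
    refine ⟨b i, le_trans ?_ (hcross x (b i) i)⟩
    rw [hMY.self_eq_one (b i) ht, hs.one _ (hMX.range _ _ t ht.le)]
    exact hs.star_le_star_left hu hu (hMX.range _ _ t ht.le)
      (hi.le.trans (hMX.monotoneOn hs x (a i) ht₀ ht htt.le))
  · obtain ⟨i, hi⟩ := hnetY y
    refine ⟨a i, le_trans ?_ (hcross (a i) y i)⟩
    rw [hMX.self_eq_one (a i) ht, hs.one_star (hMY.range _ _ t ht.le), hMY.km3]
    exact hs.star_le_star_left hu hu (hMY.range _ _ t ht.le)
      (hi.le.trans (hMY.monotoneOn hs y (b i) ht₀ ht htt.le))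

theorem IsCompact.exists_strictMono_dist_lt {α : Type*} [PseudoMetricSpace α] {s : Set α}
    (hs : IsCompact s) {v : ℕ → α} (hv : ∀ n, v n ∈ s) {δ : ℝ} (hδ : 0 < δ) :
    ∃ φ : ℕ → ℕ, StrictMono φ ∧ ∀ j k, dist (v (φ j)) (v (φ k)) < δ := by
  obtain ⟨_, -, ψ, hψ, hlim⟩ := hs.tendsto_subseq hv
  obtain ⟨K, hK⟩ := Metric.cauchySeq_iff.1 hlim.cauchySeq δ hδ
  exact ⟨fun k => ψ (k + K), hψ.comp fun _ _ h => Nat.add_lt_add_right h K,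
    fun j k => hK _ (Nat.le_add_left K j) _ (Nat.le_add_left K k)⟩

theorem star_le_of_close_nets {X Y ι : Type*} {star : ℝ → ℝ → ℝ} {MX : X → X → ℝ → ℝ}
    {MY : Y → Y → ℝ → ℝ} {a : ι → X} {b : ι → Y} {t₀ γ δ u : ℝ} (hs : IsContinuousTNorm star)
    (hMX : IsNAFuzzyMetric star MX) (hMY : IsNAFuzzyMetric star MY) (ht₀ : 0 < t₀)
    (hu : u ∈ 𝕀) (hγ0 : 0 ≤ γ) (hγ : ∀ i j, γ ≤ MY (b i) (b j) t₀) (hγu : 0 < star γ u)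
    (hgap : ∀ c ∈ Icc γ 1, star c u ≤ c - δ)
    (hclose : ∀ i j, dist (MX (a i) (a j) t₀) (MY (b i) (b j) t₀) < δ)
    (hratio : ∀ s, t₀ < s → ∀ i j, MX (a i) (a j) s < MY (b i) (b j) s →
      MX (a i) (a j) t₀ / star (MY (b i) (b j) t₀) u ≤ MX (a i) (a j) s / star (MY (b i) (b j) s) u)
    (s : ℝ) (hs0 : t₀ < s) (i j : ι) : star (MY (b i) (b j) s) u ≤ MX (a i) (a j) s := by
  have hY₀ := hMY.range (b i) (b j) t₀ ht₀.le
  have hij := hclose i j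
  rw [Real.dist_eq, abs_lt] at hij
  exact hs.star_le_of_div_le (hMX.range _ _ s (ht₀.trans hs0).le).1
    (hMY.range _ _ s (ht₀.trans hs0).le) hu
    (hγu.trans_le (hs.star_le_star_right hu ⟨hγ0, (hγ i j).trans hY₀.2⟩ hY₀ (hγ i j)))
    ((hgap _ ⟨hγ i j, hY₀.2⟩).trans_lt (by linarith)) (hratio s hs0 i j)

theorem fuzzy_precompactness_general_general (star : ℝ → ℝ → ℝ) (hstar : IsContinuousTNorm star)
    (X : ℕ → Type u)
    [∀ n, Nonempty (X n)]
    (M : ∀ n, X n → X n → ℝ → ℝ)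
    (hM : ∀ n, IsNAFuzzyMetric star (M n))
    -- (1) the t-norm satisfies (TN1)
    (htn1 : TN1 star)
    -- (2) a nondecreasing left-continuous lower bound for all the `s`-diameters
    (C : ℝ → ℝ)
    (hC : ∀ s, 0 < s → 0 < C s ∧ C s ≤ 1 ∧ ∀ n, C s ≤ fuzzyDiam (M n) s)
    -- (3) a uniform bound on the cover numbers
    (N : ℝ → ℝ → ℕ)
    -- (4) compatible `(t,ε)`-nets
    (hnets : ∀ t ε : ℝ, 0 < t → 0 < ε → ε < 1 →
      ∃ x : ∀ n, Fin (N ε t) → X n,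
        (∀ n, ∀ p : X n, ∃ i, 1 - ε < M n p (x n i) t) ∧
        (∀ n m, ∀ s, t < s → ∀ i j,
          M n (x n i) (x n j) s < M m (x m i) (x m j) s →
          M n (x n i) (x n j) t / star (M m (x m i) (x m j) t) (1 - ε) ≤
            M n (x n i) (x n j) s / star (M m (x m i) (x m j) s) (1 - ε))) :
    ∀ t ε : ℝ, 0 < t → 0 < ε → ε < 1 →
      ∃ φ : ℕ → ℕ, StrictMono φ ∧
        ∀ j k, star (1 - ε) (1 - ε) < MGH star (M (φ j)) (M (φ k)) t := by
  intro t ε ht hε hε1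
  have ht₀ : 0 < t / 2 := half_pos ht
  obtain ⟨hγ0, hγ1, hγ⟩ := hC (t / 2) ht₀
  obtain ⟨η, hη0, hη1, hηε, hγη⟩ := hstar.exists_lt_star_one_sub ⟨hγ0.le, hγ1⟩ hγ0 hε hε1
  have hu : 1 - η ∈ 𝕀 := ⟨by linarith, by linarith⟩
  obtain ⟨δ, hδ, hgap⟩ := hstar.exists_forall_star_le_sub htn1 hγ0 hγ1 hu (by linarith)
  obtain ⟨x, hnet, hratio⟩ := hnets (t / 2) η ht₀ hη0 hη1
  have hcube : IsCompact (univ.pi fun _ : Fin (N η (t / 2)) × Fin (N η (t / 2)) => 𝕀) :=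
    isCompact_univ_pi fun _ => isCompact_Icc
  obtain ⟨φ, hφ, hclose⟩ := hcube.exists_strictMono_dist_lt
    (v := fun n ij => M n (x n ij.1) (x n ij.2) (t / 2))
    (fun n => mem_univ_pi.2 fun _ => (hM n).range _ _ _ ht₀.le) hδ
  have hcompare := fun j k => star_le_of_close_nets hstar (hM (φ j)) (hM (φ k)) ht₀ hu hγ0.le
    (fun _ _ => (hγ _).trans ((hM _).fuzzyDiam_le _ _ ht₀.le)) hγη hgap
    (fun i i' => (dist_le_pi_dist _ _ (i, i')).trans_lt (hclose j k)) (hratio _ _)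
  exact ⟨φ, hφ, fun j k => hηε.trans_le (star_le_MGH_of_nets hstar (hM _) (hM _) hu
    (by linarith) ht₀ (half_lt_self ht) (hnet _) (hnet _) (hcompare j k) (hcompare k j))⟩

/-- Theorem `th:main1`: a sequence of nonempty compact non-Archimedean
fuzzy metric spaces satisfying (1)-(4) admits, for every `t > 0` and `0 < ε < 1`, a
subsequence whose members are pairwise at fuzzy Gromov-Hausdorff distance
`> (1-ε) ∗ (1-ε)` at time `t`. -/
theorem fuzzy_precompactness_general (star : ℝ → ℝ → ℝ) (hstar : IsContinuousTNorm star)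
    (X : ℕ → Type u) [∀ n, TopologicalSpace (X n)] [∀ n, CompactSpace (X n)]
    [∀ n, Nonempty (X n)]
    (M : ∀ n, X n → X n → ℝ → ℝ)
    (hM : ∀ n, IsNAFuzzyMetric star (M n)) (hcomp : ∀ n, FuzzyCompatible (M n))
    -- (1) the t-norm satisfies (TN1)
    (htn1 : TN1 star)
    -- (2) a nondecreasing left-continuous lower bound for all the `s`-diameters
    (C : ℝ → ℝ) (hCmono : MonotoneOn C (Ioi 0))
    (hClc : ∀ s, 0 < s → ContinuousWithinAt C (Iio s) s)
    (hC : ∀ s, 0 < s → 0 < C s ∧ C s ≤ 1 ∧ ∀ n, C s ≤ fuzzyDiam (M n) s)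
    -- (3) a uniform bound on the cover numbers
    (N : ℝ → ℝ → ℕ)
    (hcov : ∀ ε t : ℝ, 0 < t → 0 < ε → ε < 1 → ∀ n, CovLE (M n) ε t (N ε t))
    -- (4) compatible `(t,ε)`-nets
    (hnets : ∀ t ε : ℝ, 0 < t → 0 < ε → ε < 1 →
      ∃ x : ∀ n, Fin (N ε t) → X n,
        (∀ n, ∀ p : X n, ∃ i, 1 - ε < M n p (x n i) t) ∧
        (∀ n m, ∀ s, t < s → ∀ i j,
          M n (x n i) (x n j) s < M m (x m i) (x m j) s →
          M n (x n i) (x n j) t / star (M m (x m i) (x m j) t) (1 - ε) ≤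
            M n (x n i) (x n j) s / star (M m (x m i) (x m j) s) (1 - ε))) :
    ∀ t ε : ℝ, 0 < t → 0 < ε → ε < 1 →
      ∃ φ : ℕ → ℕ, StrictMono φ ∧
        ∀ j k, star (1 - ε) (1 - ε) < MGH star (M (φ j)) (M (φ k)) t :=
  fuzzy_precompactness_general_general star hstar X M hM htn1 C hC N hnets
end
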